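/- arXiv:2108.03211 — 5 statements merged into one kernel-verified Lean document; each statement's English description precedes it below -/
import Mathlib

section
/- (Proposition 2.9) Let G be a countable group. For ≺ ∈ Õ and g ∈ G let succ_≺(g) be the immediate successor of g in the order ≺ (which exists since ≺ is of type ℤ) and let incr_≺(g) = succ_≺(g)·g⁻¹. Then the map π : Õ → G^G, π(≺) = incr_≺, is injective and Borel measurable (with respect to the Borel σ-algebras of Õ ⊆ {0,1}^{G×G} and of G^G with the product topology, G discrete), and it intertwines the action of G on Õ with the shift action of G on G^G defined by (g·x)(h) = x(hg): that is, incr_{g(≺)}(a) = incr_≺(ag) for all a, g ∈ G and ≺ ∈ Õ. -/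
open scoped Classical

/-- An *order of type ℤ* on `G`. -/
def IsZOrder {G : Type*} (r : G → G → Prop) : Prop :=
  IsStrictTotalOrder G r ∧ (∀ a b : G, {g : G | r a g ∧ r g b}.Finite) ∧
    (∀ a : G, ∃ b, r b a) ∧ (∀ a : G, ∃ b, r a b)

/-- The relation on `G` encoded by an element of `{0,1}^{G×G}`. -/
def relOf {G : Type*} (x : G × G → Bool) : G → G → Prop := fun a b => x (a, b) = true

/-- The set `Õ` of orders of type ℤ on `G`, as a subset of `{0,1}^{G×G}`. -/
def ZOrders (G : Type*) : Set (G × G → Bool) := {x | IsZOrder (relOf x)}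

/-- The action of `g ∈ G` on orders: `a ≺' b ⟺ ag ≺ bg`. -/
def orderAct {G : Type*} [Group G] (g : G) (r : G → G → Prop) : G → G → Prop :=
  fun a b => r (a * g) (b * g)

/-- `b` is the immediate successor of `a` with respect to `r`. -/
def IsSucc {G : Type*} (r : G → G → Prop) (a b : G) : Prop :=
  r a b ∧ ∀ c, ¬(r a c ∧ r c b)

/-- The immediate successor of `a` with respect to `r` (junk value `a` if it does not exist). -/
noncomputable def succOf {G : Type*} (r : G → G → Prop) (a : G) : G :=
  if h : ∃ b, IsSucc r a b then h.choose else a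

/-- The (left) increment of `r` at `a`: `incr_r(a) = succ_r(a)·a⁻¹`. -/
noncomputable def incrOf {G : Type*} [Group G] (r : G → G → Prop) (a : G) : G :=
  succOf r a * a⁻¹

/-!
A ℤ-order is recovered from its successor map: `a ≺ b` iff `b = succ^[n+1] a` for some `n`,
because the iterates of `succ` above `a` are distinct and cannot all stay in the finite interval
`(a, b)`. The successor map in turn is recovered from the increments, `succ a = incr a * a`.
Measurability holds because `incr a = g` iff `g * a` is the immediate successor of `a`, a countable
Boolean combination of coordinate conditions; equivariance holds because right translation by `g`
carries immediate successors for `g(≺)` to immediate successors for `≺`.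
-/

section Successor

variable {G : Type*} {r : G → G → Prop} {a b c : G}

theorem IsSucc.eq [Std.Trichotomous r] (hb : IsSucc r a b) (hc : IsSucc r a c) : b = c := by
  rcases trichotomous_of r b c with hbc | hbc | hcb
  · exact absurd ⟨hb.1, hbc⟩ (hc.2 b)
  · exact hbc
  · exact absurd ⟨hc.1, hcb⟩ (hb.2 c)

theorem succOf_eq_of_isSucc [Std.Trichotomous r] (hb : IsSucc r a b) : succOf r a = b := by
  have hex : ∃ c, IsSucc r a c := ⟨b, hb⟩
  rw [succOf, dif_pos hex]
  exact hex.choose_spec.eq hb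

/-- The successor is the `r`-least element of the finite set `(a, b]`. -/
theorem exists_isSucc_of_rel [IsStrictOrder G r] (hfin : {g | r a g ∧ r g b}.Finite)
    (hab : r a b) : ∃ c, IsSucc r a c := by
  set s := insert b {g | r a g ∧ r g b}
  have hwf := Set.wellFoundedOn_iff.mp ((hfin.insert b).wellFoundedOn (r := r))
  obtain ⟨m, hms, hmin⟩ := hwf.has_min s ⟨b, Set.mem_insert b _⟩
  have hle : ∀ g, r g m → r g b := by
    intro g hgm
    rcases hms with rfl | ⟨-, hmb⟩
    exacts [hgm, _root_.trans hgm hmb]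
  refine ⟨m, ?_, fun g ⟨hag, hgm⟩ => hmin g (.inr ⟨hag, ?_⟩) ⟨hgm, .inr ⟨hag, ?_⟩, hms⟩⟩
  · rcases hms with rfl | ⟨ham, -⟩
    exacts [hab, ham]
  all_goals exact hle g hgm

theorem IsSucc.rel_of_rel [Std.Trichotomous r] (hc : IsSucc r a c) (hab : r a b) (hcb : c ≠ b) :
    r c b := by
  rcases trichotomous_of r c b with hcb' | rfl | hbc
  exacts [hcb', absurd rfl hcb, absurd ⟨hab, hbc⟩ (hc.2 b)]

namespace IsZOrder

theorem isSucc_succOf (h : IsZOrder r) (a : G) : IsSucc r a (succOf r a) := by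
  have := h.1
  obtain ⟨b, hab⟩ := h.2.2.2 a
  obtain ⟨c, hc⟩ := exists_isSucc_of_rel (h.2.1 a b) hab
  rwa [succOf_eq_of_isSucc hc]

theorem rel_iterate_succOf (h : IsZOrder r) (a : G) (n : ℕ) : r a ((succOf r)^[n + 1] a) := by
  have := h.1
  induction n with
  | zero => exact (h.isSucc_succOf a).1
  | succ n ih =>
    rw [Function.iterate_succ_apply']
    exact _root_.trans ih (h.isSucc_succOf _).1

theorem exists_iterate_succOf_eq (h : IsZOrder r) (hab : r a b) :
    ∃ n, (succOf r)^[n + 1] a = b := by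
  have := h.1
  by_contra! hne
  set f : ℕ → G := fun n => (succOf r)^[n + 1] a
  have hfb : ∀ n, r (f n) b := by
    intro n
    induction n with
    | zero => exact (h.isSucc_succOf a).rel_of_rel hab (hne 0)
    | succ n ih =>
      have hsucc : f (n + 1) = succOf r (f n) := Function.iterate_succ_apply' _ _ _
      have hne' : f (n + 1) ≠ b := hne (n + 1)
      rw [hsucc] at hne' ⊢
      exact (h.isSucc_succOf (f n)).rel_of_rel ih hne'
  have hf : f.Injective := Function.Injective.of_lt_imp_ne fun m n hmn => by
    obtain ⟨k, rfl⟩ := Nat.exists_eq_add_of_lt hmn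
    have hmk := h.rel_iterate_succOf (f m) k
    rw [← Function.iterate_add_apply] at hmk
    exact ne_of_irrefl (by convert hmk using 2; omega)
  exact Set.infinite_of_injective_forall_mem (s := {g | r a g ∧ r g b}) hf
    (fun n => ⟨h.rel_iterate_succOf a n, hfb n⟩) (h.2.1 a b)

theorem rel_iff_exists_iterate_succOf (h : IsZOrder r) :
    r a b ↔ ∃ n, (succOf r)^[n + 1] a = b :=
  ⟨h.exists_iterate_succOf_eq, fun ⟨n, hn⟩ => hn ▸ h.rel_iterate_succOf a n⟩

theorem eq_of_succOf_eq {s : G → G → Prop} (hr : IsZOrder r) (hs : IsZOrder s)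
    (h : succOf r = succOf s) : r = s := by
  ext a b
  rw [hr.rel_iff_exists_iterate_succOf, hs.rel_iff_exists_iterate_succOf, h]

variable [Group G]

theorem eq_of_incrOf_eq {s : G → G → Prop} (hr : IsZOrder r) (hs : IsZOrder s)
    (h : incrOf r = incrOf s) : r = s :=
  hr.eq_of_succOf_eq hs <| funext fun a => by simpa [incrOf] using congrFun h a

theorem incrOf_eq_iff (h : IsZOrder r) {g : G} : incrOf r a = g ↔ IsSucc r a (g * a) := by
  have := h.1
  rw [incrOf, mul_inv_eq_iff_eq_mul]
  exact ⟨fun hg => hg ▸ h.isSucc_succOf a, succOf_eq_of_isSucc⟩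

end IsZOrder

section Action

variable [Group G]

theorem isSucc_orderAct_iff (g : G) : IsSucc (orderAct g r) a b ↔ IsSucc r (a * g) (b * g) :=
  and_congr_right' ⟨fun H c => by simpa [orderAct] using H (c * g⁻¹), fun H c => H (c * g)⟩

instance [Std.Trichotomous r] (g : G) : Std.Trichotomous (orderAct g r) :=
  (RelEmbedding.preimage ⟨(· * g), mul_left_injective g⟩ r).trichotomous

theorem succOf_orderAct [Std.Trichotomous r] (g : G) :
    succOf (orderAct g r) a = succOf r (a * g) * g⁻¹ := by
  by_cases hex : ∃ b, IsSucc r (a * g) b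
  · obtain ⟨b, hb⟩ := hex
    rw [succOf_eq_of_isSucc hb]
    exact succOf_eq_of_isSucc ((isSucc_orderAct_iff g).mpr (by simpa using hb))
  · have hex' : ¬∃ b, IsSucc (orderAct g r) a b := fun ⟨b, hb⟩ =>
      hex ⟨_, (isSucc_orderAct_iff g).mp hb⟩
    rw [succOf, succOf, dif_neg hex, dif_neg hex', mul_inv_cancel_right]

theorem incrOf_orderAct [Std.Trichotomous r] (g : G) :
    incrOf (orderAct g r) a = incrOf r (a * g) := by
  rw [incrOf, incrOf, succOf_orderAct]
  group

end Action

end Successor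

theorem relOf_injective {G : Type*} : Function.Injective (relOf (G := G)) := fun _ _ h =>
  funext fun p => Bool.eq_iff_iff.mpr (iff_of_eq (congrFun (congrFun h p.1) p.2))

theorem measurableSet_setOf_isSucc {G : Type*} [Countable G] (a b : G) :
    MeasurableSet {x : G × G → Bool | IsSucc (relOf x) a b} := by
  have hcoord (p : G × G) : Measurable fun x : G × G → Bool => x p = true :=
    measurableSet_setOfPred.mp (measurable_pi_apply p (measurableSet_singleton true) :
      MeasurableSet ((fun x : G × G → Bool => x p) ⁻¹' {true}))
  exact ((hcoord _).and <| Measurable.forall fun c => ((hcoord _).and (hcoord _)).not).setOf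

theorem incr_injective_measurable_equivariant_general (G : Type*) [Group G] [Countable G]
    [MeasurableSpace G] :
    Set.InjOn (fun x : G × G → Bool => fun a : G => incrOf (relOf x) a) (ZOrders G) ∧
    Measurable (fun x : ZOrders G => fun a : G => incrOf (relOf (x : G × G → Bool)) a) ∧
    (∀ x ∈ ZOrders G, ∀ a g : G,
      incrOf (orderAct g (relOf x)) a = incrOf (relOf x) (a * g)) := by
  refine ⟨fun _ hx _ hy hxy => relOf_injective (IsZOrder.eq_of_incrOf_eq hx hy hxy), ?_,
    fun x hx a g => have := hx.1; incrOf_orderAct g⟩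
  refine measurable_pi_lambda _ fun a => measurable_to_countable' fun g => ?_
  have hpre : (fun x : ZOrders G => incrOf (relOf x.1) a) ⁻¹' {g} =
      Subtype.val ⁻¹' {x | IsSucc (relOf x) a (g * a)} :=
    Set.ext fun x => x.2.incrOf_eq_iff
  rw [hpre]
  exact measurable_subtype_coe (measurableSet_setOf_isSucc a (g * a))

/-- Proposition 2.9: the map `π : Õ → G^G`, `π(≺) = incr_≺`, is injective and Borel
measurable (`G` discrete, `G^G` with the product σ-algebra), and it intertwines the
`G`-action on `Õ` with the shift action on `G^G`: `incr_{g(≺)}(a) = incr_≺(ag)`. -/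
theorem incr_injective_measurable_equivariant (G : Type*) [Group G] [Countable G]
    [MeasurableSpace G] [DiscreteMeasurableSpace G] :
    Set.InjOn (fun x : G × G → Bool => fun a : G => incrOf (relOf x) a) (ZOrders G) ∧
    Measurable (fun x : ZOrders G => fun a : G => incrOf (relOf (x : G × G → Bool)) a) ∧
    (∀ x ∈ ZOrders G, ∀ a g : G,
      incrOf (orderAct g (relOf x)) a = incrOf (relOf x) (a * g)) :=
  incr_injective_measurable_equivariant_general G
end

section
/- (Proposition 2.11) Let G be a countable group. For each ≺ ∈ Õ there is a unique anchored bijection bi_≺ : ℤ → G (i.e. bi_≺(0) = e) which is an order isomorphism from (ℤ,<) to (G,≺). The map ρ : Õ → Bi(ℤ,G), ρ(≺) = bi_≺, is a bijection onto the set Bi(ℤ,G) of all anchored bijections ℤ → G; its inverse is continuous (with respect to the topology of Bi(ℤ,G) ⊆ G^ℤ with the product topology, G discrete, and of Õ ⊆ {0,1}^{G×G}); ρ is Borel measurable; and ρ intertwines the G-action on Õ with the G-action on Bi(ℤ,G) defined by (g(bi))(i) = bi(i+k)·g⁻¹ where k is the unique integer with bi(k) = g: that is, for all g ∈ G, i ∈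 ℤ and ≺ ∈ Õ, bi_{g(≺)}(i) = bi_≺(i+k)·g⁻¹, where k is the unique integer with bi_≺(k) = g. -/
open scoped Classical

/-- `f : ℤ → G` is an anchored order isomorphism from `(ℤ,<)` to `(G,r)`. -/
def IsAnchoredIso {G : Type*} [One G] (r : G → G → Prop) (f : ℤ → G) : Prop :=
  Function.Bijective f ∧ f 0 = 1 ∧ ∀ i j : ℤ, i < j ↔ r (f i) (f j)

/-- The anchored bijection `bi_≺ : ℤ → G` associated with an order of type ℤ
(junk value if it does not exist). -/
noncomputable def biOf {G : Type*} [One G] (r : G → G → Prop) : ℤ → G :=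
  if h : ∃ f : ℤ → G, IsAnchoredIso r f then h.choose else fun _ => 1

/-- The set `Bi(ℤ,G)` of anchored bijections from `ℤ` to `G`. -/
def AnchoredBij (G : Type*) [One G] : Set (ℤ → G) :=
  {f | Function.Bijective f ∧ f 0 = 1}

/-- The inverse assignment: the order (as element of `{0,1}^{G×G}`) determined by an
anchored bijection `f : ℤ → G`. -/
noncomputable def ordOfBi {G : Type*} (f : ℤ → G) : G × G → Bool :=
  fun p => decide (∃ i j : ℤ, i < j ∧ f i = p.1 ∧ f j = p.2)

/-!
A linear order with finite intervals and no endpoints is order-isomorphic to `ℤ`, and an order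
automorphism of `ℤ` commutes with the successor, so it is a translation; hence an anchored
isomorphism exists and is unique. Every anchored bijection pulls `<` back to an order of type ℤ,
so `ρ` is a bijection with inverse `ordOfBi`. Whether `a ≺ b` is read off the positions of `a`
and `b` alone, i.e. from finitely many coordinates of the bijection, so `ordOfBi` is continuous;
as a continuous injection on a Borel subset of the Polish space `G^ℤ` its inverse `ρ` is Borel by
the Lusin–Souslin theorem. Equivariance is uniqueness again: `i ↦ bi_≺(i+k)·g⁻¹` is an anchored
isomorphism for `g(≺)`.
-/

open Function Set Topology

theorem Int.orderIso_apply_eq_add_apply_zero (σ : ℤ ≃o ℤ) (i : ℤ) : σ i = i + σ 0 := by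
  have hsucc : ∀ j, σ (j + 1) = σ j + 1 := fun j => by
    simpa only [Order.succ_eq_add_one] using σ.map_succ j
  induction i using Int.induction_on with
  | zero => simp
  | succ i ih => rw [hsucc, ih]; ring
  | pred i ih =>
    have := hsucc (-(i : ℤ) - 1)
    rw [sub_add_cancel] at this
    omega

section Relations

variable {G : Type*} [One G] {r : G → G → Prop} {f f' : ℤ → G}

theorem IsAnchoredIso.unique (hf : IsAnchoredIso r f) (hf' : IsAnchoredIso r f') : f = f' := by
  obtain ⟨hb, h0, hlt⟩ := hf
  obtain ⟨hb', h0', hlt'⟩ := hf'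
  let e' := Equiv.ofBijective f' hb'
  have hmono : StrictMono (e'.symm ∘ f) := fun i j hij =>
    (hlt' _ _).2 (by simpa [e', Equiv.ofBijective_apply_symm_apply] using (hlt i j).1 hij)
  let σ := hmono.orderIsoOfSurjective _ (e'.symm.surjective.comp hb.2)
  have hσ0 : σ 0 = 0 := by
    simp [σ, h0, e', Equiv.symm_apply_eq, h0']
  funext i
  calc f i = f' (σ i) := by simp [σ, e', Equiv.ofBijective_apply_symm_apply]
    _ = f' i := by rw [Int.orderIso_apply_eq_add_apply_zero, hσ0, add_zero]

theorem IsAnchoredIso.isZOrder (hf : IsAnchoredIso r f) : IsZOrder r := by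
  obtain ⟨hb, -, hlt⟩ := hf
  let e : ((· < ·) : ℤ → ℤ → Prop) ≃r r := ⟨Equiv.ofBijective f hb, (hlt _ _).symm⟩
  refine ⟨e.symm.toRelEmbedding.isStrictTotalOrder, fun a b => ?_, fun a => ?_, fun a => ?_⟩
  · refine ((finite_Ioo (e.symm a) (e.symm b)).image e).subset fun g hg => ?_
    exact ⟨e.symm g, ⟨e.symm.map_rel_iff.2 hg.1, e.symm.map_rel_iff.2 hg.2⟩, e.apply_symm_apply g⟩
  · exact ⟨e (e.symm a - 1), by simpa using e.map_rel_iff.2 (sub_one_lt (e.symm a))⟩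
  · exact ⟨e (e.symm a + 1), by simpa using e.map_rel_iff.2 (lt_add_one (e.symm a))⟩

theorem IsZOrder.exists_isAnchoredIso (hr : IsZOrder r) : ∃ f : ℤ → G, IsAnchoredIso r f := by
  obtain ⟨hsto, hfin, hmin, hmax⟩ := hr
  let : LinearOrder G := linearOrderOfSTO r
  let : LocallyFiniteOrder G := LocallyFiniteOrder.ofFiniteIcc fun a b => by
    by_cases hab : a ≤ b
    · rw [← Ioo_union_both hab]
      exact (hfin a b).union (toFinite _)
    · rw [Icc_eq_empty hab]
      exact finite_empty
  have : NoMinOrder G := ⟨hmin⟩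
  have : NoMaxOrder G := ⟨hmax⟩
  let := LinearLocallyFiniteOrder.succOrder G
  let := LinearLocallyFiniteOrder.predOrder G
  let e : G ≃o ℤ := orderIsoIntOfLinearSuccPredArch
  refine ⟨fun i => e.symm (i + e 1), e.symm.bijective.comp (Equiv.addRight (e 1)).bijective,
    by simp, fun i j => ?_⟩
  change i < j ↔ e.symm (i + e 1) < e.symm (j + e 1)
  rw [e.symm.lt_iff_lt, add_lt_add_iff_right]

theorem IsAnchoredIso.biOf_eq (hf : IsAnchoredIso r f) : biOf r = f := by
  rw [biOf, dif_pos ⟨f, hf⟩]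
  exact (Exists.choose_spec ⟨f, hf⟩).unique hf

theorem IsZOrder.isAnchoredIso_biOf (hr : IsZOrder r) : IsAnchoredIso r (biOf r) := by
  obtain ⟨f, hf⟩ := hr.exists_isAnchoredIso
  rwa [hf.biOf_eq]

end Relations

section Action

variable {G : Type*} [Group G] {r : G → G → Prop}

theorem IsAnchoredIso.orderAct {f : ℤ → G} (hf : IsAnchoredIso r f) {g : G} {k : ℤ} (hk : f k = g) :
    IsAnchoredIso (orderAct g r) (fun i => f (i + k) * g⁻¹) := by
  obtain ⟨hb, -, hlt⟩ := hf
  refine ⟨(Equiv.mulRight g⁻¹).bijective.comp (hb.comp (Equiv.addRight k).bijective),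
    by simp [hk], fun i j => ?_⟩
  simp only [_root_.orderAct, inv_mul_cancel_right, ← hlt, add_lt_add_iff_right]

theorem IsZOrder.biOf_orderAct (hr : IsZOrder r) {g : G} {k : ℤ} (hk : biOf r k = g) (i : ℤ) :
    biOf (orderAct g r) i = biOf r (i + k) * g⁻¹ := by
  rw [(hr.isAnchoredIso_biOf.orderAct hk).biOf_eq]

end Action

section Encoding

variable {G : Type*}

theorem ordOfBi_apply_apply {f : ℤ → G} (hf : Injective f) (i j : ℤ) :
    ordOfBi f (f i, f j) = decide (i < j) := by
  simp [ordOfBi, hf.eq_iff]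

theorem isAnchoredIso_ordOfBi [One G] {f : ℤ → G} (hf : f ∈ AnchoredBij G) :
    IsAnchoredIso (relOf (ordOfBi f)) f :=
  ⟨hf.1, hf.2, fun i j => by simp [relOf, ordOfBi_apply_apply hf.1.1]⟩

theorem IsAnchoredIso.ordOfBi_eq [One G] {x : G × G → Bool} {f : ℤ → G}
    (hf : IsAnchoredIso (relOf x) f) : ordOfBi f = x := by
  funext ⟨a, b⟩
  obtain ⟨i, rfl⟩ := hf.1.2 a
  obtain ⟨j, rfl⟩ := hf.1.2 b
  rw [ordOfBi_apply_apply hf.1.1, Bool.eq_iff_iff, decide_eq_true_iff]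
  exact hf.2.2 i j

theorem mapsTo_biOf [One G] :
    MapsTo (fun x => biOf (relOf x)) (ZOrders G) (AnchoredBij G) := fun _ hx =>
  ⟨(IsZOrder.isAnchoredIso_biOf hx).1, (IsZOrder.isAnchoredIso_biOf hx).2.1⟩

theorem mapsTo_ordOfBi [One G] : MapsTo ordOfBi (AnchoredBij G) (ZOrders G) := fun _ hf =>
  (isAnchoredIso_ordOfBi hf).isZOrder

theorem invOn_ordOfBi_biOf [One G] :
    InvOn ordOfBi (fun x => biOf (relOf x)) (ZOrders G) (AnchoredBij G) :=
  ⟨fun _ hx => (IsZOrder.isAnchoredIso_biOf hx).ordOfBi_eq,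
    fun _ hf => (isAnchoredIso_ordOfBi hf).biOf_eq⟩

theorem continuousOn_ordOfBi [TopologicalSpace G] [DiscreteTopology G] :
    ContinuousOn (ordOfBi : (ℤ → G) → G × G → Bool) {f | Bijective f} := by
  intro f hf
  refine continuousWithinAt_pi.2 fun ⟨a, b⟩ => ?_
  obtain ⟨i, rfl⟩ := hf.2 a
  obtain ⟨j, rfl⟩ := hf.2 b
  have hcoord (n : ℤ) : ∀ᶠ g in 𝓝[{f | Bijective f}] f, g n = f n :=
    eventually_nhdsWithin_of_eventually_nhds <|
      (continuous_apply n).continuousAt ((isOpen_discrete {f n}).mem_nhds rfl)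
  refine (continuousWithinAt_const (b := decide (i < j))).congr_of_eventuallyEq ?_
    (ordOfBi_apply_apply hf.1 i j)
  filter_upwards [self_mem_nhdsWithin, hcoord i, hcoord j] with g hg hgi hgj
  rw [← hgi, ← hgj, ordOfBi_apply_apply hg.1]

theorem measurableSet_anchoredBij [One G] [Countable G] [MeasurableSpace G]
    [MeasurableSingletonClass G] : MeasurableSet (AnchoredBij G) := by
  simp only [AnchoredBij, Bijective, Injective, Surjective, ofPred_and, ofPred_forall,
    ofPred_exists]
  measurability

theorem measurable_biOf [One G] [Countable G] [MeasurableSpace G] [DiscreteMeasurableSpace G] :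
    Measurable fun x : ZOrders G => biOf (relOf (x : G × G → Bool)) := by
  let : TopologicalSpace G := ⊥
  have : DiscreteTopology G := ⟨rfl⟩
  have : PolishSpace (ℤ → G) := {}
  intro B hB
  have himage : MeasurableSet (ordOfBi '' (AnchoredBij G ∩ B)) :=
    (measurableSet_anchoredBij.inter hB).image_of_continuousOn_injOn
      (continuousOn_ordOfBi.mono fun f hf => hf.1.1)
      (invOn_ordOfBi_biOf.2.injOn.mono inter_subset_left)
  convert measurable_subtype_coe himage
  ext ⟨x, hx⟩
  constructor
  · exact fun h => ⟨_, ⟨mapsTo_biOf hx, h⟩, invOn_ordOfBi_biOf.1 hx⟩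
  · rintro ⟨f, ⟨hf, hfB⟩, rfl⟩
    change biOf (relOf (ordOfBi f)) ∈ B
    rwa [(isAnchoredIso_ordOfBi hf).biOf_eq]

end Encoding

theorem biOf_bijective_measurable_equivariant_general (G : Type*) [Group G] [Countable G]
    [TopologicalSpace G] [DiscreteTopology G]
    [MeasurableSpace G] [DiscreteMeasurableSpace G] :
    (∀ x ∈ ZOrders G, ∃! f : ℤ → G, IsAnchoredIso (relOf x) f) ∧
    Set.BijOn (fun x : G × G → Bool => biOf (relOf x)) (ZOrders G) (AnchoredBij G) ∧
    ContinuousOn (ordOfBi : (ℤ → G) → (G × G → Bool)) (AnchoredBij G) ∧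
    (∀ x ∈ ZOrders G, ordOfBi (biOf (relOf x)) = x) ∧
    Measurable (fun x : ZOrders G => biOf (relOf (x : G × G → Bool))) ∧
    (∀ x ∈ ZOrders G, ∀ (g : G) (i k : ℤ), biOf (relOf x) k = g →
      biOf (orderAct g (relOf x)) i = biOf (relOf x) (i + k) * g⁻¹) :=
  ⟨fun _ hx => ⟨_, IsZOrder.isAnchoredIso_biOf hx, fun _ hf => hf.biOf_eq.symm⟩,
    invOn_ordOfBi_biOf.bijOn mapsTo_biOf mapsTo_ordOfBi,
    continuousOn_ordOfBi.mono fun _ hf => hf.1,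
    invOn_ordOfBi_biOf.1,
    measurable_biOf,
    fun _ hx _ i _ hk => IsZOrder.biOf_orderAct hx hk i⟩

/-- Proposition 2.11: every order `≺` of type ℤ on `G` admits a unique anchored order
isomorphism `bi_≺ : (ℤ,<) → (G,≺)`; the map `ρ : ≺ ↦ bi_≺` is a bijection from `Õ` onto
`Bi(ℤ,G)`, its inverse is continuous, `ρ` is Borel measurable, and `ρ` intertwines the
`G`-actions: `bi_{g(≺)}(i) = bi_≺(i+k)·g⁻¹` where `k` is the unique integer with
`bi_≺(k) = g`. -/
theorem biOf_bijective_measurable_equivariant (G : Type*) [Group G] [Countable G]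
    [Infinite G] [TopologicalSpace G] [DiscreteTopology G]
    [MeasurableSpace G] [DiscreteMeasurableSpace G] :
    (∀ x ∈ ZOrders G, ∃! f : ℤ → G, IsAnchoredIso (relOf x) f) ∧
    Set.BijOn (fun x : G × G → Bool => biOf (relOf x)) (ZOrders G) (AnchoredBij G) ∧
    ContinuousOn (ordOfBi : (ℤ → G) → (G × G → Bool)) (AnchoredBij G) ∧
    (∀ x ∈ ZOrders G, ordOfBi (biOf (relOf x)) = x) ∧
    Measurable (fun x : ZOrders G => biOf (relOf (x : G × G → Bool))) ∧
    (∀ x ∈ ZOrders G, ∀ (g : G) (i k : ℤ), biOf (relOf x) k = g →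
      biOf (orderAct g (relOf x)) i = biOf (relOf x) (i + k) * g⁻¹) :=
  biOf_bijective_measurable_equivariant_general G
end

section
/- (Corollary 2.8) Let G be a countably infinite group admitting a Følner sequence. Then there exists a Følner sequence (F_n)_{n∈ℕ} in G which is nested (F_n ⊆ F_{n+1} for all n), centered (F_1 = {e}), and progresses by one element (|F_n| = n for all n ∈ ℕ). -/
/-!
Stack right translates of ever more invariant Følner sets on top of `{1}`, each translate
disjoint from what is already there. Right translation does not change `|F △ gF|`, so the
boundary of the stack is at most `2` plus the sum of the boundaries of its blocks, and a
weighted Cesàro argument makes the stacks a Følner sequence. Taking the `k`-th block of size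
`o(k)`, consecutive stacks differ by a vanishing proportion of their size, so the stacks stay
Følner when the elements of each new block are added one at a time.
-/

open Filter
open scoped Classical symmDiff

/-- A Følner sequence in `G`: a sequence of nonempty finite sets `F n` with
`|F n △ g·F n| / |F n| → 0` for every `g ∈ G`. -/
def IsFolnerSeq {G : Type*} [Group G] (F : ℕ → Finset G) : Prop :=
  (∀ n, (F n).Nonempty) ∧ ∀ g : G,
    Tendsto (fun n => ((F n ∆ (F n).image (fun h => g * h)).card : ℝ) / (F n).card)
      atTop (nhds 0)

open Finset Asymptotics
open scoped Pointwise

namespace Finset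

variable {α : Type*}

lemma toFinset_take_toList_subset (s : Finset α) (r : ℕ) : (s.toList.take r).toFinset ⊆ s :=
  fun _ hx => mem_toList.1 (List.mem_of_mem_take (List.mem_toFinset.1 hx))

lemma card_toFinset_take_toList (s : Finset α) (r : ℕ) :
    #((s.toList.take r).toFinset) = min r #s := by
  rw [List.toFinset_card_of_nodup ((nodup_toList s).sublist (List.take_sublist _ _)),
    List.length_take, length_toList]

variable (B : ℕ → Finset α)

def level (n : ℕ) : ℕ := Nat.findGreatest (fun k => #(B k) ≤ n + 1) n

noncomputable def interpolate (n : ℕ) : Finset α :=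
  B (level B n) ∪
    ((B (level B n + 1) \ B (level B n)).toList.take (n + 1 - #(B (level B n)))).toFinset

variable {B}

lemma level_mono : Monotone (level B) := fun _ _ hmn =>
  Nat.findGreatest_mono (fun _ hk => hk.trans (by omega)) hmn

lemma subset_interpolate (n : ℕ) : B (level B n) ⊆ interpolate B n :=
  subset_union_left

lemma card_level_le (h0 : #(B 0) = 1) (n : ℕ) : #(B (level B n)) ≤ n + 1 :=
  Nat.findGreatest_spec (P := fun k => #(B k) ≤ n + 1) (Nat.zero_le n) (by simp [h0])

lemma interpolate_zero (h0 : #(B 0) = 1) : interpolate B 0 = B 0 := by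
  simp [interpolate, level, h0]

section StrictMono

variable (hB : StrictMono B)
include hB

lemma interpolate_subset (n : ℕ) : interpolate B n ⊆ B (level B n + 1) :=
  union_subset (hB.monotone (Nat.le_add_right _ 1))
    ((toFinset_take_toList_subset _ _).trans sdiff_subset)

lemma interpolate_mono : Monotone (interpolate B) := by
  refine monotone_nat_of_le_succ fun n => ?_
  rcases (level_mono (B := B) n.le_succ).eq_or_lt with h | h
  · rw [interpolate, interpolate, ← h]
    refine union_subset_union_right fun x hx => ?_
    rw [List.mem_toFinset] at hx ⊢
    exact List.take_subset_take_left _ (by omega) hx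
  · exact (interpolate_subset hB n).trans <|
      (hB.monotone h).trans (subset_interpolate (n + 1))

variable (h0 : #(B 0) = 1)
include h0

lemma add_one_le_card_apply (k : ℕ) : k + 1 ≤ #(B k) := by
  simpa [h0] using (card_strictMono.comp hB).add_le_nat k 0

lemma lt_card_level_succ (n : ℕ) : n + 1 < #(B (level B n + 1)) := by
  by_contra! h
  have := add_one_le_card_apply hB h0 (level B n + 1)
  exact (Nat.le_findGreatest (P := fun k => #(B k) ≤ n + 1) (by omega) h).not_gt
    (Nat.lt_succ_self _)

lemma card_interpolate (n : ℕ) : #(interpolate B n) = n + 1 := by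
  rw [interpolate, card_union_of_disjoint (disjoint_sdiff.mono_right
      (toFinset_take_toList_subset _ _)), card_toFinset_take_toList,
    card_sdiff_of_subset (hB.monotone (Nat.le_add_right _ 1))]
  have := card_level_le h0 n
  have := lt_card_level_succ hB h0 n
  omega

lemma tendsto_level : Tendsto (level B) atTop atTop :=
  tendsto_atTop_atTop.2 fun k => ⟨#(B k), fun n hn =>
    Nat.le_findGreatest (by have := add_one_le_card_apply hB h0 k; omega) (by omega)⟩

end StrictMono

end Finset

section Group

variable {G : Type*} [Group G]

noncomputable def folnerDefect (g : G) (s : Finset G) : ℕ := #(s ∆ s.image (g * ·))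

lemma folnerDefect_le (g : G) (s : Finset G) : folnerDefect g s ≤ 2 * #s := by
  calc folnerDefect g s ≤ #(s ∪ s.image (g * ·)) := card_le_card symmDiff_le_sup
    _ ≤ #s + #(s.image (g * ·)) := card_union_le _ _
    _ ≤ 2 * #s := by linarith [card_image_le (s := s) (f := (g * ·))]

lemma folnerDefect_union_le (g : G) (s t : Finset G) :
    folnerDefect g (s ∪ t) ≤ folnerDefect g s + folnerDefect g t := by
  refine (card_le_card fun x hx => ?_).trans (card_union_le _ _)
  simp only [image_union, mem_symmDiff, mem_union] at hx ⊢
  tauto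

lemma folnerDefect_le_of_subset (g : G) {s t : Finset G} (h : s ⊆ t) :
    folnerDefect g t ≤ folnerDefect g s + 2 * #(t \ s) := by
  calc folnerDefect g t = folnerDefect g (s ∪ t \ s) := by rw [union_sdiff_of_subset h]
    _ ≤ folnerDefect g s + folnerDefect g (t \ s) := folnerDefect_union_le g _ _
    _ ≤ folnerDefect g s + 2 * #(t \ s) := by gcongr; exact folnerDefect_le g _

lemma folnerDefect_image_mul_right (g t : G) (s : Finset G) :
    folnerDefect g (s.image (· * t)) = folnerDefect g s := by
  have hcomm : (g * ·) ∘ (· * t) = (· * t) ∘ (g * ·) := funext fun x => (mul_assoc g x t).symm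
  rw [folnerDefect, image_image, hcomm, ← image_image, ← image_symmDiff _ _ (mul_left_injective t),
    card_image_of_injective _ (mul_left_injective t), folnerDefect]

lemma exists_disjoint_image_mul_right [Infinite G] (s t : Finset G) :
    ∃ a : G, Disjoint s (t.image (· * a)) := by
  obtain ⟨a, ha⟩ := Infinite.exists_notMem_finset (t⁻¹ * s)
  refine ⟨a, disjoint_right.2 fun x hx hxs => ha ?_⟩
  obtain ⟨y, hy, rfl⟩ := mem_image.1 hx
  simpa using mul_mem_mul (inv_mem_inv hy) hxs

end Group

lemma tendsto_add_sum_div_one_add_sum {a w : ℕ → ℝ} (c : ℝ) (hw : ∀ i, 1 ≤ w i)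
    (h : Tendsto (fun i => a i / w i) atTop (nhds 0)) :
    Tendsto (fun k => (c + ∑ i ∈ range k, a i) / (1 + ∑ i ∈ range k, w i)) atTop (nhds 0) := by
  have hw₀ : ∀ i, 0 ≤ w i := fun i => zero_le_one.trans (hw i)
  have hsum : Tendsto (fun k => ∑ i ∈ range k, w i) atTop atTop :=
    tendsto_atTop_mono
      (fun k => by simpa using card_nsmul_le_sum (range k) w 1 fun i _ => hw i)
      tendsto_natCast_atTop_atTop
  have ha : a =o[atTop] w :=
    (isLittleO_iff_tendsto' (.of_forall fun i hi => by linarith [hw i])).2 h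
  have hc : (fun _ => c) =o[atTop] fun k => ∑ i ∈ range k, w i :=
    isLittleO_const_left.2 (.inr (tendsto_norm_atTop_atTop.comp hsum))
  have hle : (fun k => ∑ i ∈ range k, w i) =O[atTop] fun k => 1 + ∑ i ∈ range k, w i :=
    IsBigO.of_bound 1 (.of_forall fun k => by
      have := sum_nonneg fun i (_ : i ∈ range k) => hw₀ i
      rw [Real.norm_of_nonneg this, Real.norm_of_nonneg (by linarith)]
      linarith)
  exact ((hc.add (ha.sum_range hw₀ hsum)).trans_isBigO hle).tendsto_div_nhds_zero

lemma exists_tendsto_atTop_and_comp_isLittleO (c : ℕ → ℕ) :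
    ∃ j : ℕ → ℕ, Tendsto j atTop atTop ∧ (fun k => (c (j k) : ℝ)) =o[atTop] fun k => (k : ℝ) := by
  set j := fun k => Nat.findGreatest (fun i => (i + 1) * c i ≤ k) k
  have le_j : ∀ i k, i + (i + 1) * c i ≤ k → i ≤ j k := fun i k hk =>
    Nat.le_findGreatest (by nlinarith) (by omega)
  have j_spec : ∀ k, c 0 ≤ k → (j k + 1) * c (j k) ≤ k := fun k hk =>
    Nat.findGreatest_spec (P := fun i => (i + 1) * c i ≤ k) (Nat.zero_le k) (by omega)
  refine ⟨j, tendsto_atTop_atTop.2 fun i => ⟨_, le_j i⟩, isLittleO_iff.2 fun ε hε => ?_⟩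
  obtain ⟨i, hi⟩ := exists_nat_one_div_lt hε
  filter_upwards [eventually_ge_atTop (i + (i + 1) * c i + c 0)] with k hk
  have hcj : (c (j k) : ℝ) * (i + 1) ≤ k := by
    have hij := le_j i k (by omega)
    have := j_spec k (by omega)
    exact_mod_cast (Nat.mul_le_mul_left (c (j k)) (Nat.succ_le_succ hij)).trans (by linarith)
  rw [Real.norm_natCast, Real.norm_natCast]
  calc (c (j k) : ℝ) ≤ k * (1 / (i + 1)) := by
        rw [mul_one_div, le_div_iff₀ (by positivity)]
        exact hcj
    _ ≤ ε * k := by rw [mul_comm]; gcongr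

section Folner

variable {G : Type*} [Group G]

lemma IsFolnerSeq.comp_tendsto {F : ℕ → Finset G} (hF : IsFolnerSeq F) {j : ℕ → ℕ}
    (hj : Tendsto j atTop atTop) : IsFolnerSeq (F ∘ j) :=
  ⟨fun n => hF.1 (j n), fun g => (hF.2 g).comp hj⟩

lemma folnerDefect_interpolate_div_le {B : ℕ → Finset G} (hB : StrictMono B) (h0 : #(B 0) = 1)
    (g : G) (n : ℕ) :
    (folnerDefect g (interpolate B n) : ℝ) / #(interpolate B n) ≤
      (folnerDefect g (B (level B n)) : ℝ) / #(B (level B n)) +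
        2 * ((#(B (level B n + 1) \ B (level B n)) : ℝ) / #(B (level B n))) := by
  set k := level B n
  have hpos : (0 : ℝ) < #(B k) :=
    Nat.cast_pos.2 (by have := add_one_le_card_apply hB h0 k; omega)
  have hsub : B k ⊆ interpolate B n := subset_interpolate n
  have hdefect : folnerDefect g (interpolate B n) ≤
      folnerDefect g (B k) + 2 * #(B (k + 1) \ B k) :=
    (folnerDefect_le_of_subset g hsub).trans (by gcongr; exact interpolate_subset hB n)
  rw [mul_div_assoc', ← add_div]
  calc (folnerDefect g (interpolate B n) : ℝ) / #(interpolate B n)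
      ≤ (folnerDefect g (B k) + 2 * #(B (k + 1) \ B k)) / #(interpolate B n) := by
        gcongr; exact_mod_cast hdefect
    _ ≤ (folnerDefect g (B k) + 2 * #(B (k + 1) \ B k)) / #(B k) := by
        gcongr

lemma isFolnerSeq_interpolate {B : ℕ → Finset G} (hB : StrictMono B) (h0 : #(B 0) = 1)
    (hF : IsFolnerSeq B)
    (hgrowth : Tendsto (fun k => (#(B (k + 1) \ B k) : ℝ) / #(B k)) atTop (nhds 0)) :
    IsFolnerSeq (interpolate B) := by
  refine ⟨fun n => card_pos.1 (by rw [card_interpolate hB h0]; omega), fun g => ?_⟩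
  have hlim := ((hF.2 g).add (hgrowth.const_mul 2)).comp (tendsto_level hB h0)
  rw [mul_zero, add_zero] at hlim
  exact tendsto_of_tendsto_of_tendsto_of_le_of_le tendsto_const_nhds hlim
    (fun n => by positivity) (folnerDefect_interpolate_div_le hB h0 g)

end Folner

section Stack

variable {G : Type*} [Group G] [Infinite G] (P : ℕ → Finset G)

noncomputable def stackTranslates : ℕ → Finset G
  | 0 => {1}
  | k + 1 => stackTranslates k ∪
      (P k).image (· * (exists_disjoint_image_mul_right (stackTranslates k) (P k)).choose)

lemma exists_stackTranslates_succ (k : ℕ) : ∃ a : G,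
    Disjoint (stackTranslates P k) ((P k).image (· * a)) ∧
      stackTranslates P (k + 1) = stackTranslates P k ∪ (P k).image (· * a) :=
  ⟨_, (exists_disjoint_image_mul_right _ _).choose_spec, rfl⟩

lemma card_stackTranslates (k : ℕ) : #(stackTranslates P k) = 1 + ∑ i ∈ range k, #(P i) := by
  induction k with
  | zero => simp [stackTranslates]
  | succ k ih =>
    obtain ⟨a, hdisj, hsucc⟩ := exists_stackTranslates_succ P k
    rw [hsucc, card_union_of_disjoint hdisj, card_image_of_injective _ (mul_left_injective a), ih,
      sum_range_succ, add_assoc]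

lemma card_sdiff_stackTranslates (k : ℕ) :
    #(stackTranslates P (k + 1) \ stackTranslates P k) = #(P k) := by
  obtain ⟨a, hdisj, hsucc⟩ := exists_stackTranslates_succ P k
  rw [hsucc, union_sdiff_cancel_left hdisj, card_image_of_injective _ (mul_left_injective a)]

lemma folnerDefect_stackTranslates_le (g : G) (k : ℕ) :
    folnerDefect g (stackTranslates P k) ≤ 2 + ∑ i ∈ range k, folnerDefect g (P i) := by
  induction k with
  | zero => simpa [stackTranslates] using folnerDefect_le g {1}
  | succ k ih =>
    obtain ⟨a, -, hsucc⟩ := exists_stackTranslates_succ P k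
    rw [hsucc, sum_range_succ, ← folnerDefect_image_mul_right g a (P k)]
    exact (folnerDefect_union_le g _ _).trans (by omega)

variable {P}

lemma stackTranslates_strictMono (hP : ∀ k, (P k).Nonempty) : StrictMono (stackTranslates P) :=
  strictMono_nat_of_lt_succ fun k => by
    obtain ⟨a, hdisj, hsucc⟩ := exists_stackTranslates_succ P k
    rw [hsucc]
    exact left_lt_sup.2 fun h => ((hP k).image _).ne_empty (hdisj.symm.eq_bot_of_le h)

lemma isFolnerSeq_stackTranslates (hP : IsFolnerSeq P) : IsFolnerSeq (stackTranslates P) := by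
  refine ⟨fun k => card_pos.1 (by rw [card_stackTranslates]; omega), fun g => ?_⟩
  have hlim := tendsto_add_sum_div_one_add_sum (a := fun i => (folnerDefect g (P i) : ℝ)) 2
    (fun i => by exact_mod_cast (hP.1 i).card_pos) (hP.2 g)
  refine tendsto_of_tendsto_of_tendsto_of_le_of_le tendsto_const_nhds hlim
    (fun k => by positivity) fun k => ?_
  rw [card_stackTranslates]
  push_cast
  gcongr
  exact_mod_cast folnerDefect_stackTranslates_le P g k

lemma tendsto_card_sdiff_stackTranslates_div (hP : ∀ k, (P k).Nonempty)
    (hsmall : (fun k => (#(P k) : ℝ)) =o[atTop] fun k => (k : ℝ)) :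
    Tendsto (fun k => (#(stackTranslates P (k + 1) \ stackTranslates P k) : ℝ) /
      #(stackTranslates P k)) atTop (nhds 0) := by
  simp_rw [card_sdiff_stackTranslates]
  refine (hsmall.trans_isBigO (IsBigO.of_bound 1 (.of_forall fun k => ?_))).tendsto_div_nhds_zero
  rw [Real.norm_natCast, Real.norm_natCast, one_mul, Nat.cast_le]
  exact (card_strictMono.comp (stackTranslates_strictMono hP)).id_le k

end Stack

/-- Indexed from `0`: the paper's `F_1 = {e}` and `|F_n| = n` read `F 0 = {1}` and
`|F n| = n + 1` here. -/
theorem exists_nested_centered_folner_general {G : Type*} [Group G] [Infinite G]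
    (hG : ∃ F : ℕ → Finset G, IsFolnerSeq F) :
    ∃ F : ℕ → Finset G, IsFolnerSeq F ∧ (∀ n, F n ⊆ F (n + 1)) ∧
      F 0 = {1} ∧ ∀ n, (F n).card = n + 1 := by
  obtain ⟨F, hF⟩ := hG
  obtain ⟨j, hj, hsmall⟩ := exists_tendsto_atTop_and_comp_isLittleO fun n => #(F n)
  have hP := hF.comp_tendsto hj
  have hB := stackTranslates_strictMono hP.1
  have h0 : #(stackTranslates (F ∘ j) 0) = 1 := rfl
  refine ⟨interpolate (stackTranslates (F ∘ j)), ?_, fun n => interpolate_mono hB n.le_succ,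
    interpolate_zero h0, card_interpolate hB h0⟩
  exact isFolnerSeq_interpolate hB h0 (isFolnerSeq_stackTranslates hP)
    (tendsto_card_sdiff_stackTranslates_div hP.1 hsmall)

/-- Corollary 2.8: every countably infinite group admitting a Følner sequence admits a
Følner sequence which is nested, centered (its first term is `{e}`) and progresses by
one element (the `n`-th term has exactly `n` elements; here indexed so that
`|F n| = n + 1`). -/
theorem exists_nested_centered_folner {G : Type*} [Group G] [Countable G] [Infinite G]
    (hG : ∃ F : ℕ → Finset G, IsFolnerSeq F) :
    ∃ F : ℕ → Finset G, IsFolnerSeq F ∧ (∀ n, F n ⊆ F (n + 1)) ∧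
      F 0 = {1} ∧ ∀ n, (F n).card = n + 1 :=
  exists_nested_centered_folner_general hG
end

section
/- (Lemma 6.3 a) Let G and Γ be countable groups acting measurably on a measurable space (X, m), with the same orbits (for every x ∈ X, {γ·x : γ ∈ Γ} = {g·x : g ∈ G}). Let m₀ be a sub-σ-algebra of m which is G-invariant (for every g ∈ G and A ∈ m₀, the preimage of A under the map x ↦ g·x belongs to m₀) and such that for every γ ∈ Γ and g ∈ G the set {x ∈ X : γ·x = g·x} belongs to m₀. Then m₀ is Γ-invariant: for every γ ∈ Γ and A ∈ m₀, the preimage of A under x ↦ γ·x belongs to m₀. -/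
open MeasureTheory

/-- Lemma 6.3 a): if `G` and `Γ` act on `X` with the same orbits, `m₀` is a `G`-invariant
sub-σ-algebra of `m`, and all the orbit-change sets `{x | γ·x = g·x}` belong to `m₀`,
then `m₀` is `Γ`-invariant. -/
theorem sub_sigma_algebra_invariant_of_orbit_change_measurable
    {G Γ X : Type*} [Group G] [Countable G] [Group Γ] [Countable Γ]
    [MulAction G X] [MulAction Γ X]
    (m : MeasurableSpace X)
    (horb : ∀ x : X, MulAction.orbit Γ x = MulAction.orbit G x)
    (m₀ : MeasurableSpace X) (hle : m₀ ≤ m)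
    (hGinv : ∀ (g : G) (A : Set X), MeasurableSet[m₀] A →
      MeasurableSet[m₀] ((fun x : X => g • x) ⁻¹' A))
    (hchange : ∀ (γ : Γ) (g : G), MeasurableSet[m₀] {x : X | γ • x = g • x}) :
    ∀ (γ : Γ) (A : Set X), MeasurableSet[m₀] A →
      MeasurableSet[m₀] ((fun x : X => γ • x) ⁻¹' A) := by
  intro γ A hA
  have hcov : (fun x : X => γ • x) ⁻¹' A =
      ⋃ g : G, ({x : X | γ • x = g • x} ∩ (fun x : X => g • x) ⁻¹' A) := by
    ext x
    simp only [Set.mem_preimage, Set.mem_iUnion, Set.mem_inter_iff, Set.mem_setOf_eq]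
    constructor
    · intro hx
      have : γ • x ∈ MulAction.orbit G x := by
        rw [← horb]; exact ⟨γ, rfl⟩
      obtain ⟨g, hg⟩ := this
      exact ⟨g, hg.symm, by rw [show g • x = γ • x from hg]; exact hx⟩
    · rintro ⟨g, hg, hgA⟩
      rwa [hg]
  rw [hcov]
  exact MeasurableSet.iUnion fun g => (hchange γ g).inter (hGinv g A hA)
end

section
/- (Lemma 6.5, pointwise form) Let G act on a set X and on a set Y with the G-action on Y free (g·y = g'·y implies g = g'), and let π : X → Y satisfy π(g·x) = g·π(x) for all g, x. Let Γ be a group acting on Y with the same orbits as the G-action on Y. Then the formula γ∗x := g·x, where g ∈ G is the unique element with g·π(x) = γ·π(x), defines an action of Γ on X which extends the Γ-action on Y via π (π(γ∗x) = γ·π(x) for all γ, x) and has the same orbits as the G-action on X ({γ∗x : γ ∈ Γ} = {g·x : g ∈ G} for every x). Moreover this extension is unique: any action of Γ on X satisfying π(γ·x) = γ·π(x) for all γ, x and having the same orbits as the G-action on X is given by this formula. -/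
/-- Lemma 6.5 (pointwise form): let `G` act on `X` and on `Y` with the `G`-action on `Y`
free, let `π : X → Y` be `G`-equivariant, and let `Γ` act on `Y` with the same orbits as
the `G`-action on `Y`. Then the formula `γ∗x := g·x`, where `g` is the unique element of
`G` with `g·π(x) = γ·π(x)`, defines an action of `Γ` on `X` which extends the `Γ`-action
on `Y` via `π` and has the same orbits as the `G`-action on `X`; moreover it is the
unique such action. -/
theorem unique_orbit_equivalent_extension
    {G Γ X Y : Type*} [Group G] [Countable G] [Group Γ] [Countable Γ]
    [MulAction G X] [MulAction G Y] [MulAction Γ Y]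
    (hfree : ∀ (y : Y) (g g' : G), g • y = g' • y → g = g')
    (π : X → Y) (hπ : ∀ (g : G) (x : X), π (g • x) = g • π x)
    (horb : ∀ y : Y, MulAction.orbit Γ y = MulAction.orbit G y) :
    ∃ a : Γ → X → X,
      (∀ (γ : Γ) (x : X) (g : G), g • π x = γ • π x → a γ x = g • x) ∧
      ((∀ x : X, a 1 x = x) ∧
        (∀ (γ₁ γ₂ : Γ) (x : X), a (γ₁ * γ₂) x = a γ₁ (a γ₂ x)) ∧
        (∀ (γ : Γ) (x : X), π (a γ x) = γ • π x) ∧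
        (∀ x : X, {y : X | ∃ γ : Γ, a γ x = y} = MulAction.orbit G x)) ∧
      ∀ b : Γ → X → X,
        ((∀ x : X, b 1 x = x) ∧
          (∀ (γ₁ γ₂ : Γ) (x : X), b (γ₁ * γ₂) x = b γ₁ (b γ₂ x)) ∧
          (∀ (γ : Γ) (x : X), π (b γ x) = γ • π x) ∧
          (∀ x : X, {y : X | ∃ γ : Γ, b γ x = y} = MulAction.orbit G x)) → b = a := by
  classical
  have hex : ∀ (γ : Γ) (x : X), ∃ g : G, g • π x = γ • π x := by
    intro γ x
    have h : γ • π x ∈ MulAction.orbit Γ (π x) := ⟨γ, rfl⟩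
    rw [horb] at h
    obtain ⟨g, hg⟩ := h
    exact ⟨g, hg⟩
  set a : Γ → X → X := fun γ x => (hex γ x).choose • x with ha
  have key : ∀ (γ : Γ) (x : X) (g : G), g • π x = γ • π x → a γ x = g • x := by
    intro γ x g hg
    have h1 : (hex γ x).choose • π x = γ • π x := (hex γ x).choose_spec
    have := hfree (π x) (hex γ x).choose g (h1.trans hg.symm)
    simp [ha, this]
  have hpi : ∀ (γ : Γ) (x : X), π (a γ x) = γ • π x := by
    intro γ x
    rw [ha]
    simp only
    rw [hπ]
    exact (hex γ x).choose_spec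
  have hone : ∀ x : X, a 1 x = x := by
    intro x
    have : (1 : G) • π x = (1 : Γ) • π x := by simp
    rw [key 1 x 1 this, one_smul]
  have hmul : ∀ (γ₁ γ₂ : Γ) (x : X), a (γ₁ * γ₂) x = a γ₁ (a γ₂ x) := by
    intro γ₁ γ₂ x
    obtain ⟨g₂, hg₂⟩ := hex γ₂ x
    obtain ⟨g₁, hg₁⟩ := hex γ₁ (g₂ • x)
    rw [key γ₂ x g₂ hg₂, key γ₁ (g₂ • x) g₁ hg₁]
    have : (g₁ * g₂) • π x = (γ₁ * γ₂) • π x := by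
      rw [hπ] at hg₁
      rw [mul_smul, hg₂, mul_smul]
      calc g₁ • γ₂ • π x = g₁ • g₂ • π x := by rw [hg₂]
        _ = γ₁ • g₂ • π x := hg₁
        _ = γ₁ • γ₂ • π x := by rw [hg₂]
    rw [key (γ₁ * γ₂) x (g₁ * g₂) this, mul_smul]
  have horbX : ∀ x : X, {y : X | ∃ γ : Γ, a γ x = y} = MulAction.orbit G x := by
    intro x
    ext y
    constructor
    · rintro ⟨γ, rfl⟩
      obtain ⟨g, hg⟩ := hex γ x
      rw [key γ x g hg]
      exact ⟨g, rfl⟩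
    · rintro ⟨g, rfl⟩
      have h : g • π x ∈ MulAction.orbit G (π x) := ⟨g, rfl⟩
      rw [← horb] at h
      obtain ⟨γ, hγ⟩ := h
      exact ⟨γ, key γ x g hγ.symm⟩
  refine ⟨a, key, ⟨hone, hmul, hpi, horbX⟩, ?_⟩
  rintro b ⟨_, _, hbpi, hborb⟩
  funext γ x
  have hmem : b γ x ∈ {y : X | ∃ γ : Γ, b γ x = y} := ⟨γ, rfl⟩
  rw [hborb] at hmem
  obtain ⟨g, hg⟩ := hmem
  have : g • π x = γ • π x := by
    have h2 := hbpi γ x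
    rw [← hg, hπ] at h2
    exact h2
  change g • x = b γ x at hg
  rw [key γ x g this, ← hg]
end
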